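/- arXiv:1011.3638 — 4 statements merged into one kernel-verified Lean document; each statement's English description precedes it below -/
import Mathlib

section
/- Suppose the failure time T is independent of the pair (W, C) (truncation and censoring times) and β = P(T ≥ W) > 0. Then for every real t, the observed at-risk probability factorizes as G(t) := P(X ≥ t and W ≤ t | T ≥ W) = S(t) · g(t) / β, where X = min(T, C), S(t) = P(T ≥ t) and g(t) = P(W ≤ t ≤ C). -/
open MeasureTheory ProbabilityTheory

/-- Under independence of the failure time `T` from the truncation/censoring
pair `(W, C)` and `β = P(T ≥ W) > 0`, the observed at-risk probability factorizes as
`G(t) = P(X ≥ t ≥ W | T ≥ W) = S(t) · g(t) / β`, where `X = min(T, C)`,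
`S(t) = P(T ≥ t)` and `g(t) = P(W ≤ t ≤ C)`. -/
theorem at_risk_probability_factorization
    {Ω : Type*} [MeasurableSpace Ω] (μ : Measure Ω) [IsProbabilityMeasure μ]
    (T C W : Ω → ℝ) (hT : Measurable T) (hC : Measurable C) (hW : Measurable W)
    (hindep : IndepFun T (fun ω => (W ω, C ω)) μ)
    (hβ : 0 < (μ {ω | W ω ≤ T ω}).toReal) (t : ℝ) :
    ((μ[|{ω | W ω ≤ T ω}]) {ω | t ≤ min (T ω) (C ω) ∧ W ω ≤ t}).toReal
      = (μ {ω | t ≤ T ω}).toReal * (μ {ω | W ω ≤ t ∧ t ≤ C ω}).toReal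
        / (μ {ω | W ω ≤ T ω}).toReal := by
  have hs : MeasurableSet {ω | W ω ≤ T ω} :=
    measurableSet_le hW hT
  set s := {ω | W ω ≤ T ω}
  set A := {ω | t ≤ min (T ω) (C ω) ∧ W ω ≤ t}
  have hA : s ∩ A = T ⁻¹' (Set.Ici t) ∩ (fun ω => (W ω, C ω)) ⁻¹' {p : ℝ × ℝ | p.1 ≤ t ∧ t ≤ p.2} := by
    ext ω
    simp only [s, A, Set.mem_inter_iff, Set.mem_setOf_eq, Set.mem_preimage, Set.mem_Ici,
      le_min_iff]
    constructor
    · rintro ⟨_, ⟨hTt, hCt⟩, hWt⟩; exact ⟨hTt, hWt, hCt⟩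
    · rintro ⟨hTt, hWt, hCt⟩; exact ⟨hWt.trans hTt, ⟨hTt, hCt⟩, hWt⟩
  have hB : MeasurableSet {p : ℝ × ℝ | p.1 ≤ t ∧ t ≤ p.2} :=
    (measurableSet_le measurable_fst measurable_const).inter
      (measurableSet_le measurable_const measurable_snd)
  have hmul := hindep.measure_inter_preimage_eq_mul (Set.Ici t)
    {p : ℝ × ℝ | p.1 ≤ t ∧ t ≤ p.2} measurableSet_Ici hB
  have hpre1 : T ⁻¹' (Set.Ici t) = {ω | t ≤ T ω} := rfl
  have hpre2 : (fun ω => (W ω, C ω)) ⁻¹' {p : ℝ × ℝ | p.1 ≤ t ∧ t ≤ p.2}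
      = {ω | W ω ≤ t ∧ t ≤ C ω} := rfl
  rw [cond_apply hs, hA, hmul, hpre1, hpre2]
  have h1 : μ {ω | t ≤ T ω} ≠ ⊤ := measure_ne_top _ _
  have h2 : μ {ω | W ω ≤ t ∧ t ≤ C ω} ≠ ⊤ := measure_ne_top _ _
  have hβ' : μ s ≠ 0 := by
    intro h
    rw [h] at hβ
    simp at hβ
  rw [ENNReal.toReal_mul, ENNReal.toReal_mul, ENNReal.toReal_inv]
  field_simp
end

section
/- Suppose (Z, T) is independent of (W, C), Z is integrable, β = P(T ≥ W) > 0, and t1 < t2 are reals with g(s) > 0 for all s ∈ [t1, t2). Then the inverse-probability-weighted estimand is unbiased for the target: E[(S(X)/G(X)) · Δ · Z · 1{t1 ≤ X < t2} | T ≥ W] = E[Z · 1{t1 ≤ T < t2}]. In particular, since S(t1) − S(t2) = P(t1 ≤ T < t2), if P(t1 ≤ T < t2) > 0 then E[(S(X)/G(X)) · Δ · Z · 1{t1 ≤ X < t2} | T ≥ W] / (S(t1) − S(t2)) = E[Z | t1 ≤ T < t2]. -/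
/-!
On `{T ≤ C}` the observed time is `X = T`, so on the truncation event `{W ≤ T}` the integrand
is `S(T) / G(T) · Z · 1{t1 ≤ T < t2} · 1{W ≤ T ≤ C}`. Independence of `(Z, T)` and `(W, C)` lets
one integrate out `(W, C)`, replacing `1{W ≤ T ≤ C}` by `g(T)`, and it factorizes
`G(t) = S(t) g(t) / β`. Hence the weight `S(T) / G(T) · g(T)` equals `β` wherever `S(T) > 0`,
which holds almost surely, and the factor `β` cancels against the normalization of the
conditional measure given `{W ≤ T}`.
-/

open MeasureTheory ProbabilityTheory Set

lemma ae_measure_Ici_ne_zero (κ : Measure ℝ) : ∀ᵐ t ∂κ, κ (Ici t) ≠ 0 := by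
  set V := ⋃ (q : ℚ) (_ : κ (Ici (q : ℝ)) = 0), Ici (q : ℝ)
  have hV : κ V = 0 := measure_iUnion_null fun q => measure_iUnion_null fun hq => hq
  -- two such points outside `V` would enclose a rational `q` with `κ (Ici q) = 0`
  have hUV : ({t | κ (Ici t) = 0} \ V).Subsingleton := by
    intro s hs t ht
    by_contra hne
    wlog hst : s < t generalizing s t
    · exact this ht hs (Ne.symm hne) ((not_lt.1 hst).lt_of_ne (Ne.symm hne))
    obtain ⟨q, hsq, hqt⟩ := exists_rat_btwn hst
    exact ht.2 (mem_iUnion₂.2 ⟨q, measure_mono_null (Ici_subset_Ici.2 hsq.le) hs.1, hqt.le⟩)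
  rw [ae_iff]
  simp only [ne_eq, not_not]
  rw [← measure_sdiff_null hV]
  rcases hUV.eq_empty_or_singleton with h | ⟨t, h⟩
  · rw [h, measure_empty]
  · have ht : t ∈ {t | κ (Ici t) = 0} \ V := h ▸ mem_singleton t
    rw [h]
    exact measure_mono_null (singleton_subset_iff.2 self_mem_Ici) ht.1

lemma ipw_weight_mul_eq {S g : ℝ → ℝ} {I : Set ℝ} {β t : ℝ} (hβ : β ≠ 0) (hS : S t ≠ 0)
    (hg : ∀ s ∈ I, 0 < g s) (z : ℝ) :
    S t / (β⁻¹ * (S t * g t)) * z * I.indicator 1 t * g t = β * (z * I.indicator 1 t) := by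
  by_cases ht : t ∈ I
  · have hg0 : g t ≠ 0 := (hg t ht).ne'
    rw [indicator_of_mem ht, Pi.one_apply]
    field_simp
  · simp [indicator_of_notMem ht]

lemma indicator_preimage_eq_mul_indicator_one {α ι M : Type*} [MulZeroOneClass M] (f : α → M)
    (T : α → ι) (I : Set ι) : (T ⁻¹' I).indicator f = fun a => f a * I.indicator 1 (T a) := by
  simp only [← indicator_comp_right, ← indicator_mul_right, Function.comp_apply, Pi.one_apply,
    mul_one]

section

variable {Ω α β : Type*} [MeasurableSpace Ω] [MeasurableSpace α] [MeasurableSpace β]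
  {μ : Measure Ω}

lemma ae_measure_le_ne_zero {T : Ω → ℝ} (hT : AEMeasurable T μ) :
    ∀ᵐ ω ∂μ, μ {ω' | T ω ≤ T ω'} ≠ 0 := by
  filter_upwards [ae_of_ae_map hT (ae_measure_Ici_ne_zero (μ.map T))] with ω hω
  rwa [Measure.map_apply_of_aemeasurable hT measurableSet_Ici] at hω

lemma ProbabilityTheory.integral_cond {E : Type*} [NormedAddCommGroup E] [NormedSpace ℝ E]
    (μ : Measure Ω) (s : Set Ω) (f : Ω → E) :
    ∫ ω, f ω ∂μ[|s] = (μ.real s)⁻¹ • ∫ ω in s, f ω ∂μ := by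
  rw [cond, integral_smul_measure, ENNReal.toReal_inv, measureReal_def]

lemma measureReal_setOf_prodMk_mem_eq_map {Y : Ω → β} (hY : AEMeasurable Y μ)
    {s : Set (α × β)} (hs : MeasurableSet s) (x : α) :
    μ.real {ω | (x, Y ω) ∈ s} = (μ.map Y).real (Prod.mk x ⁻¹' s) :=
  (map_measureReal_apply_of_aemeasurable hY (measurable_prodMk_left hs)).symm

lemma measurable_measureReal_setOf_prodMk_mem [IsFiniteMeasure μ] {Y : Ω → β}
    (hY : AEMeasurable Y μ) {s : Set (α × β)} (hs : MeasurableSet s) :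
    Measurable fun x => μ.real {ω | (x, Y ω) ∈ s} := by
  simp_rw [measureReal_setOf_prodMk_mem_eq_map hY hs]
  exact (measurable_measure_prodMk_left hs).ennreal_toReal

theorem ProbabilityTheory.IndepFun.integral_mul_indicator_eq [IsFiniteMeasure μ]
    {X : Ω → α} {Y : Ω → β} (hXY : IndepFun X Y μ) (hX : AEMeasurable X μ)
    (hY : AEMeasurable Y μ) {f : α → ℝ} (hf : Measurable f) {s : Set (α × β)}
    (hs : MeasurableSet s)
    (hint : Integrable (fun ω => f (X ω) * μ.real {ω' | (X ω, Y ω') ∈ s}) μ) :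
    ∫ ω, f (X ω) * s.indicator 1 (X ω, Y ω) ∂μ
      = ∫ ω, f (X ω) * μ.real {ω' | (X ω, Y ω') ∈ s} ∂μ := by
  have hsection (φ : α → ℝ) (x : α) :
      ∫ y, φ x * s.indicator 1 (x, y) ∂(μ.map Y) = φ x * (μ.map Y).real (Prod.mk x ⁻¹' s) := by
    rw [integral_const_mul, ← integral_indicator_one (measurable_prodMk_left hs)]
    rfl
  have hmarginal : Integrable (fun x => f x * (μ.map Y).real (Prod.mk x ⁻¹' s)) (μ.map X) := by
    refine (integrable_map_measure ?_ hX).2 ?_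
    · exact (hf.mul (measurable_measure_prodMk_left hs).ennreal_toReal).aestronglyMeasurable
    · simpa only [← measureReal_setOf_prodMk_mem_eq_map hY hs, Function.comp_def] using hint
  have hF : Measurable fun p : α × β => f p.1 * s.indicator 1 p :=
    (hf.comp measurable_fst).mul (measurable_one.indicator hs)
  have hFint : Integrable (fun p : α × β => f p.1 * s.indicator 1 p)
      ((μ.map X).prod (μ.map Y)) := by
    refine (integrable_prod_iff hF.aestronglyMeasurable).2 ⟨ae_of_all _ fun x => ?_, ?_⟩
    · exact ((integrable_const 1).indicator (measurable_prodMk_left hs)).const_mul (f x)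
    · have hind (p : α × β) : ‖s.indicator (1 : α × β → ℝ) p‖ = s.indicator 1 p :=
        Real.norm_of_nonneg (indicator_nonneg (fun _ _ => zero_le_one) p)
      simpa only [norm_mul, hind, hsection (fun x => ‖f x‖), measureReal_nonneg,
        Real.norm_of_nonneg] using hmarginal.norm
  calc ∫ ω, f (X ω) * s.indicator 1 (X ω, Y ω) ∂μ
      = ∫ p, f p.1 * s.indicator 1 p ∂((μ.map X).prod (μ.map Y)) := by
        rw [← (indepFun_iff_map_prod_eq_prod_map_map hX hY).1 hXY,
          integral_map (hX.prodMk hY) hF.aestronglyMeasurable]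
    _ = ∫ x, f x * (μ.map Y).real (Prod.mk x ⁻¹' s) ∂(μ.map X) := by
        rw [integral_prod _ hFint]
        simp_rw [hsection f]
    _ = ∫ ω, f (X ω) * μ.real {ω' | (X ω, Y ω') ∈ s} ∂μ := by
        rw [integral_map hX hmarginal.aestronglyMeasurable]
        simp_rw [measureReal_setOf_prodMk_mem_eq_map hY hs]

end

section

variable {Ω : Type*} [MeasurableSpace Ω] {μ : Measure Ω}

lemma measureReal_le_sub_measureReal_le [IsFiniteMeasure μ] {T : Ω → ℝ} (hT : Measurable T)
    {t₁ t₂ : ℝ} (h : t₁ ≤ t₂) :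
    μ.real {ω | t₁ ≤ T ω} - μ.real {ω | t₂ ≤ T ω} = μ.real {ω | t₁ ≤ T ω ∧ T ω < t₂} := by
  rw [← measureReal_sdiff (ofPred_subset_ofPred.2 fun ω (hω : t₂ ≤ T ω) => h.trans hω)
    (measurableSet_le measurable_const hT)]
  congr 1
  ext ω
  simp [not_le]

variable {T C W Z : Ω → ℝ}

lemma measurable_measureReal_le [IsFiniteMeasure μ] (hT : Measurable T) :
    Measurable fun t => μ.real {ω | t ≤ T ω} :=
  measurable_measureReal_setOf_prodMk_mem hT.aemeasurable
    (measurableSet_le measurable_fst measurable_snd)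

lemma measurable_measureReal_le_and_le [IsFiniteMeasure μ] (hW : Measurable W)
    (hC : Measurable C) : Measurable fun t => μ.real {ω | W ω ≤ t ∧ t ≤ C ω} :=
  measurable_measureReal_setOf_prodMk_mem (hW.prodMk hC).aemeasurable
    (s := {p : ℝ × (ℝ × ℝ) | p.2.1 ≤ p.1 ∧ p.1 ≤ p.2.2}) (by measurability)

lemma measureReal_cond_atRisk_eq (hT : Measurable T) (hW : Measurable W)
    (hindep : IndepFun T (fun ω => (W ω, C ω)) μ) (t : ℝ) :
    (μ[|{ω | W ω ≤ T ω}]).real {ω | t ≤ min (T ω) (C ω) ∧ W ω ≤ t}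
      = (μ.real {ω | W ω ≤ T ω})⁻¹
          * (μ.real {ω | t ≤ T ω} * μ.real {ω | W ω ≤ t ∧ t ≤ C ω}) := by
  have hsub : {ω | t ≤ min (T ω) (C ω) ∧ W ω ≤ t} ⊆ {ω | W ω ≤ T ω} := fun ω h =>
    h.2.trans (h.1.trans (min_le_left _ _))
  have hprod : {ω | t ≤ min (T ω) (C ω) ∧ W ω ≤ t}
      = T ⁻¹' Ici t ∩ (fun ω => (W ω, C ω)) ⁻¹' (Iic t ×ˢ Ici t) := by
    ext ω
    simp only [mem_ofPred_eq, le_min_iff, mem_inter_iff, mem_preimage, mem_Ici, mem_prod, mem_Iic]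
    tauto
  rw [measureReal_def, cond_apply (measurableSet_le hW hT), inter_eq_self_of_subset_right hsub,
    hprod, hindep.measure_inter_preimage_eq_mul _ _ measurableSet_Ici
      (measurableSet_Iic.prod measurableSet_Ici), ENNReal.toReal_mul, ENNReal.toReal_mul,
    ENNReal.toReal_inv]
  rfl

theorem integral_cond_ipw_eq [IsFiniteMeasure μ] (hT : Measurable T) (hC : Measurable C)
    (hW : Measurable W) (hindep : IndepFun (fun ω => (Z ω, T ω)) (fun ω => (W ω, C ω)) μ)
    (hZint : Integrable Z μ) {S g G : ℝ → ℝ} (hS : ∀ t, S t = μ.real {ω | t ≤ T ω})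
    (hg : ∀ t, g t = μ.real {ω | W ω ≤ t ∧ t ≤ C ω}) (hβ : 0 < μ.real {ω | W ω ≤ T ω})
    (hG : ∀ t, G t = (μ[|{ω | W ω ≤ T ω}]).real {ω | t ≤ min (T ω) (C ω) ∧ W ω ≤ t})
    {I : Set ℝ} (hI : MeasurableSet I) (hgpos : ∀ s ∈ I, 0 < g s) :
    ∫ ω, S (min (T ω) (C ω)) / G (min (T ω) (C ω)) * {ω' | T ω' ≤ C ω'}.indicator 1 ω * Z ω
        * I.indicator 1 (min (T ω) (C ω)) ∂μ[|{ω | W ω ≤ T ω}]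
      = ∫ ω, Z ω * I.indicator 1 (T ω) ∂μ := by
  set A : Set Ω := {ω | W ω ≤ T ω}
  set atRisk : Set ((ℝ × ℝ) × (ℝ × ℝ)) := {p | p.2.1 ≤ p.1.2 ∧ p.1.2 ≤ p.2.2}
  have hGSg (t : ℝ) : G t = (μ.real A)⁻¹ * (S t * g t) := by
    rw [hG, hS, hg]
    exact measureReal_cond_atRisk_eq hT hW (hindep.comp measurable_snd measurable_id) t
  set φ : ℝ × ℝ → ℝ := fun x => S x.2 / G x.2 * x.1 * I.indicator 1 x.2
  have hSm : Measurable S := funext hS ▸ measurable_measureReal_le hT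
  have hgm : Measurable g := funext hg ▸ measurable_measureReal_le_and_le hW hC
  have hGm : Measurable G := funext hGSg ▸ by fun_prop
  have hφ : Measurable φ := by fun_prop (disch := exact hI)
  have hintegrand : A.indicator (fun ω => S (min (T ω) (C ω)) / G (min (T ω) (C ω))
        * {ω' | T ω' ≤ C ω'}.indicator 1 ω * Z ω * I.indicator 1 (min (T ω) (C ω)))
      = fun ω => φ (Z ω, T ω) * atRisk.indicator 1 ((Z ω, T ω), (W ω, C ω)) := by
    ext ω
    by_cases hTC : T ω ≤ C ω <;> simp [A, atRisk, φ, indicator_apply, hTC]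
  have hweight : ∀ᵐ ω ∂μ, φ (Z ω, T ω) * μ.real {ω' | ((Z ω, T ω), (W ω', C ω')) ∈ atRisk}
      = μ.real A * (Z ω * I.indicator 1 (T ω)) := by
    filter_upwards [ae_measure_le_ne_zero hT.aemeasurable] with ω hω
    change S (T ω) / G (T ω) * Z ω * I.indicator 1 (T ω)
      * μ.real {ω' | W ω' ≤ T ω ∧ T ω ≤ C ω'} = _
    have hS0 : S (T ω) ≠ 0 := hS _ ▸ (measureReal_ne_zero_iff (measure_ne_top _ _)).2 hω
    rw [← hg, hGSg]
    exact ipw_weight_mul_eq hβ.ne' hS0 hgpos (Z ω)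
  have hZI : Integrable (fun ω => Z ω * I.indicator 1 (T ω)) μ := by
    simpa only [indicator_preimage_eq_mul_indicator_one] using hZint.indicator (hT hI)
  rw [integral_cond, ← integral_indicator (measurableSet_le hW hT), hintegrand,
    hindep.integral_mul_indicator_eq (hZint.aemeasurable.prodMk hT.aemeasurable)
      (hW.prodMk hC).aemeasurable hφ (by measurability)
      ((hZI.const_mul _).congr (hweight.mono fun _ => Eq.symm)),
    integral_congr_ae hweight, integral_const_mul, smul_eq_mul, inv_mul_cancel_left₀ hβ.ne']

end

theorem ipw_backward_mean_unbiased_general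
    {Ω : Type*} [MeasurableSpace Ω] (μ : Measure Ω) [IsProbabilityMeasure μ]
    (T C W Z : Ω → ℝ) (hT : Measurable T) (hC : Measurable C) (hW : Measurable W)
    (hindep : IndepFun (fun ω => (Z ω, T ω)) (fun ω => (W ω, C ω)) μ)
    (hZint : Integrable Z μ)
    (S g G : ℝ → ℝ)
    (hS : ∀ t, S t = (μ {ω | t ≤ T ω}).toReal)
    (hg : ∀ t, g t = (μ {ω | W ω ≤ t ∧ t ≤ C ω}).toReal)
    (hβ : 0 < (μ {ω | W ω ≤ T ω}).toReal)
    (hG : ∀ t, G t = ((μ[|{ω | W ω ≤ T ω}]) {ω | t ≤ min (T ω) (C ω) ∧ W ω ≤ t}).toReal)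
    (t1 t2 : ℝ) (hgpos : ∀ s ∈ Set.Ico t1 t2, 0 < g s) :
    (∫ ω, (S (min (T ω) (C ω)) / G (min (T ω) (C ω)))
          * Set.indicator {ω' | T ω' ≤ C ω'} (fun _ => (1 : ℝ)) ω
          * Z ω
          * Set.indicator {ω' | t1 ≤ min (T ω') (C ω') ∧ min (T ω') (C ω') < t2}
              (fun _ => (1 : ℝ)) ω ∂(μ[|{ω | W ω ≤ T ω}]))
        = ∫ ω, Z ω * Set.indicator {ω' | t1 ≤ T ω' ∧ T ω' < t2} (fun _ => (1 : ℝ)) ω ∂μ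
      ∧ (0 < (μ {ω | t1 ≤ T ω ∧ T ω < t2}).toReal →
          (∫ ω, (S (min (T ω) (C ω)) / G (min (T ω) (C ω)))
              * Set.indicator {ω' | T ω' ≤ C ω'} (fun _ => (1 : ℝ)) ω
              * Z ω
              * Set.indicator {ω' | t1 ≤ min (T ω') (C ω') ∧ min (T ω') (C ω') < t2}
                  (fun _ => (1 : ℝ)) ω ∂(μ[|{ω | W ω ≤ T ω}])) / (S t1 - S t2)
            = ∫ ω, Z ω ∂(μ[|{ω | t1 ≤ T ω ∧ T ω < t2}])) := by
  have hfirst := integral_cond_ipw_eq hT hC hW hindep hZint hS hg hβ hG measurableSet_Ico hgpos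
  refine ⟨hfirst, fun hpos => ?_⟩
  obtain ⟨ω, hω₁, hω₂⟩ := nonempty_of_measure_ne_zero (ENNReal.toReal_pos_iff.1 hpos).1.ne'
  have hSB : S t1 - S t2 = μ.real {ω | t1 ≤ T ω ∧ T ω < t2} := by
    rw [hS, hS]
    exact measureReal_le_sub_measureReal_le hT (hω₁.trans hω₂.le)
  calc _ = (∫ ω, Z ω * (Ico t1 t2).indicator 1 (T ω) ∂μ) / μ.real {ω | t1 ≤ T ω ∧ T ω < t2} := by
        rw [← hfirst, hSB]
        rfl
    _ = ∫ ω, Z ω ∂μ[|{ω | t1 ≤ T ω ∧ T ω < t2}] := by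
        have hB : MeasurableSet {ω | t1 ≤ T ω ∧ T ω < t2} := hT measurableSet_Ico
        rw [integral_cond, ← integral_indicator hB, smul_eq_mul, div_eq_inv_mul,
          ← indicator_preimage_eq_mul_indicator_one]
        rfl

/-- Under independence of `(Z, T)` from `(W, C)`, integrability of `Z`,
`β = P(T ≥ W) > 0`, and positivity of `g` on `[t1, t2)`, the inverse-probability-weighted
estimand is unbiased:
`E[(S(X)/G(X)) Δ Z 1{t1 ≤ X < t2} | T ≥ W] = E[Z 1{t1 ≤ T < t2}]`, and consequently
(dividing by `S(t1) − S(t2) = P(t1 ≤ T < t2) > 0`) it identifies `E[Z | t1 ≤ T < t2]`. -/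
theorem ipw_backward_mean_unbiased
    {Ω : Type*} [MeasurableSpace Ω] (μ : Measure Ω) [IsProbabilityMeasure μ]
    (T C W Z : Ω → ℝ) (hT : Measurable T) (hC : Measurable C) (hW : Measurable W)
    (hZmeas : Measurable Z)
    (hindep : IndepFun (fun ω => (Z ω, T ω)) (fun ω => (W ω, C ω)) μ)
    (hZint : Integrable Z μ)
    (S g G : ℝ → ℝ)
    (hS : ∀ t, S t = (μ {ω | t ≤ T ω}).toReal)
    (hg : ∀ t, g t = (μ {ω | W ω ≤ t ∧ t ≤ C ω}).toReal)
    (hβ : 0 < (μ {ω | W ω ≤ T ω}).toReal)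
    (hG : ∀ t, G t = ((μ[|{ω | W ω ≤ T ω}]) {ω | t ≤ min (T ω) (C ω) ∧ W ω ≤ t}).toReal)
    (t1 t2 : ℝ) (h12 : t1 < t2) (hgpos : ∀ s ∈ Set.Ico t1 t2, 0 < g s) :
    (∫ ω, (S (min (T ω) (C ω)) / G (min (T ω) (C ω)))
          * Set.indicator {ω' | T ω' ≤ C ω'} (fun _ => (1 : ℝ)) ω
          * Z ω
          * Set.indicator {ω' | t1 ≤ min (T ω') (C ω') ∧ min (T ω') (C ω') < t2}
              (fun _ => (1 : ℝ)) ω ∂(μ[|{ω | W ω ≤ T ω}]))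
        = ∫ ω, Z ω * Set.indicator {ω' | t1 ≤ T ω' ∧ T ω' < t2} (fun _ => (1 : ℝ)) ω ∂μ
      ∧ (0 < (μ {ω | t1 ≤ T ω ∧ T ω < t2}).toReal →
          (∫ ω, (S (min (T ω) (C ω)) / G (min (T ω) (C ω)))
              * Set.indicator {ω' | T ω' ≤ C ω'} (fun _ => (1 : ℝ)) ω
              * Z ω
              * Set.indicator {ω' | t1 ≤ min (T ω') (C ω') ∧ min (T ω') (C ω') < t2}
                  (fun _ => (1 : ℝ)) ω ∂(μ[|{ω | W ω ≤ T ω}])) / (S t1 - S t2)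
            = ∫ ω, Z ω ∂(μ[|{ω | t1 ≤ T ω ∧ T ω < t2}])) :=
  ipw_backward_mean_unbiased_general μ T C W Z hT hC hW hindep hZint S g G hS hg hβ hG t1 t2 hgpos
end

section
/- Suppose (Z, T) is independent of (W, C), Z is integrable, and t1 < t2 are reals with S(s) > 0 for all s ∈ [t1, t2). Then for every bounded Borel measurable function φ : ℝ → ℝ, the marked counting process and its compensator have equal means: E[φ(T) · Z · 1{t1 ≤ T < t2} · 1{W ≤ T ≤ C}] = E[∫_{[t1, t2)} φ(s) · 1{W ≤ s ≤ X} · h(s) dΛ_T(s)], where the inner integral is over s with respect to the cumulative hazard measure Λ_T. -/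
open MeasureTheory ProbabilityTheory

/-!
Both sides equal `∫_{[t1,t2)} φ G h dμ_T` with `G s = P(W ≤ s ≤ C)`. On the left, independence
lets one integrate out `(W, C)` first, which turns `1{W ≤ T ≤ C}` into `G T`; the pull-out property
of `E[· | T]` then replaces `Z` by `h T`. On the right, exchange the two integrals: by independence
`P(W ≤ s ≤ X) = G s * S s`, and the factor `S s` cancels the hazard density `1 / S s`.
-/

namespace MeasureTheory

variable {Ω : Type*} [MeasurableSpace Ω] {μ : Measure Ω}

theorem integral_comp_mul_eq_of_condExp_comap_ae_eq {β : Type*} [MeasurableSpace β]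
    [IsFiniteMeasure μ] {T : Ω → β} {Z : Ω → ℝ} {h ψ : β → ℝ} (hT : Measurable T)
    (hZ : Integrable Z μ)
    (hcond : μ[Z | MeasurableSpace.comap T inferInstance] =ᵐ[μ] fun ω => h (T ω))
    (hψ : Measurable ψ) {M : ℝ} (hψM : ∀ t, |ψ t| ≤ M) :
    ∫ ω, ψ (T ω) * Z ω ∂μ = ∫ ω, ψ (T ω) * h (T ω) ∂μ := by
  have hm : MeasurableSpace.comap T inferInstance ≤ ‹MeasurableSpace Ω› := hT.comap_le
  have hψT : StronglyMeasurable[MeasurableSpace.comap T inferInstance] fun ω => ψ (T ω) :=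
    (hψ.comp (Measurable.of_comap_le le_rfl)).stronglyMeasurable
  have hpull := condExp_stronglyMeasurable_mul_of_bound hm hψT hZ M
    (ae_of_all _ fun ω => hψM (T ω))
  calc ∫ ω, ψ (T ω) * Z ω ∂μ
      = ∫ ω, (μ[(fun ω => ψ (T ω)) * Z | MeasurableSpace.comap T inferInstance]) ω ∂μ :=
        (integral_condExp hm).symm
    _ = ∫ ω, ψ (T ω) * h (T ω) ∂μ :=
        integral_congr_ae (hpull.trans (hcond.mono fun ω hω => by simp only [Pi.mul_apply, hω]))

theorem integrable_map_of_condExp_comap_ae_eq {β : Type*} [MeasurableSpace β]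
    {T : Ω → β} {Z : Ω → ℝ} {h : β → ℝ} (hT : Measurable T) (hh : Measurable h)
    (hcond : μ[Z | MeasurableSpace.comap T inferInstance] =ᵐ[μ] fun ω => h (T ω)) :
    Integrable h (μ.map T) :=
  (integrable_map_measure hh.aestronglyMeasurable hT.aemeasurable).mpr
    (integrable_condExp.congr hcond)

theorem integral_integral_mul_indicator_swap {β : Type*} [MeasurableSpace β] [IsFiniteMeasure μ]
    {ν : Measure β} [SFinite ν] {D : Ω → Set β} (hD : MeasurableSet {p : Ω × β | p.2 ∈ D p.1})
    {a : β → ℝ} (ha : Measurable a) (hint : Integrable (fun s => a s * μ.real {ω | s ∈ D ω}) ν) :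
    ∫ ω, ∫ s, a s * (D ω).indicator (fun _ => (1 : ℝ)) s ∂ν ∂μ
      = ∫ s, a s * μ.real {ω | s ∈ D ω} ∂ν := by
  have hslice : ∀ s, MeasurableSet {ω | s ∈ D ω} := fun s => measurable_prodMk_right hD
  have hind : ∀ ω s, (D ω).indicator (fun _ => (1 : ℝ)) s
      = {ω | s ∈ D ω}.indicator (fun _ => (1 : ℝ)) ω := fun _ _ => rfl
  have hslice_integral : ∀ (b : β → ℝ) s,
      ∫ ω, b s * (D ω).indicator (fun _ => (1 : ℝ)) s ∂μ = b s * μ.real {ω | s ∈ D ω} := by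
    intro b s
    simp_rw [hind, integral_const_mul]
    rw [← integral_indicator_one (hslice s)]
    rfl
  set f : Ω → β → ℝ := fun ω s => a s * (D ω).indicator (fun _ => (1 : ℝ)) s
  have hmeas : StronglyMeasurable (Function.uncurry f) :=
    ((ha.comp measurable_snd).mul (measurable_const.indicator hD)).stronglyMeasurable
  have hprod : Integrable (Function.uncurry f) (μ.prod ν) := by
    refine (integrable_prod_iff' hmeas.aestronglyMeasurable).mpr ⟨ae_of_all _ fun s => ?_, ?_⟩
    · simp_rw [f, Function.uncurry_apply_pair, hind]
      exact ((integrable_const 1).indicator (hslice s)).const_mul (a s)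
    · refine hint.norm.congr (ae_of_all _ fun s => ?_)
      simp_rw [f, Function.uncurry_apply_pair, norm_mul, norm_indicator_eq_indicator_norm, norm_one]
      rw [hslice_integral (fun s => ‖a s‖), Real.norm_of_nonneg measureReal_nonneg]
  rw [integral_integral_swap hprod]
  exact integral_congr_ae (ae_of_all _ (hslice_integral a))

theorem setIntegral_withDensity_ofReal_one_div {X : Type*} [MeasurableSpace X] {ν : Measure X}
    {S : X → ℝ} (hS : Measurable S) {A : Set X} (hA : MeasurableSet A)
    (hS_nonneg : ∀ s ∈ A, 0 ≤ S s) (g : X → ℝ) :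
    ∫ s in A, g s ∂ν.withDensity (fun s => ENNReal.ofReal (1 / S s)) = ∫ s in A, g s / S s ∂ν := by
  rw [setIntegral_withDensity_eq_setIntegral_toReal_smul (by fun_prop)
    (ae_of_all _ fun _ => ENNReal.ofReal_lt_top) g hA]
  refine setIntegral_congr_fun hA fun s hs => ?_
  rw [ENNReal.toReal_ofReal (one_div_nonneg.mpr (hS_nonneg s hs)), smul_eq_mul, one_div_mul_eq_div]

end MeasureTheory

namespace ProbabilityTheory

variable {Ω : Type*} [MeasurableSpace Ω] {μ : Measure Ω}

theorem IndepFun.integral_comp_prodMk {α β E : Type*} [MeasurableSpace α] [MeasurableSpace β]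
    [NormedAddCommGroup E] [NormedSpace ℝ E] [IsFiniteMeasure μ] {X : Ω → α} {Y : Ω → β}
    (hXY : IndepFun X Y μ) (hX : AEMeasurable X μ) (hY : AEMeasurable Y μ) {F : α × β → E}
    (hF : AEStronglyMeasurable F ((μ.map X).prod (μ.map Y)))
    (hFi : Integrable (fun ω => F (X ω, Y ω)) μ) :
    ∫ ω, F (X ω, Y ω) ∂μ = ∫ x, ∫ y, F (x, y) ∂(μ.map Y) ∂(μ.map X) := by
  have hmap := (indepFun_iff_map_prod_eq_prod_map_map hX hY).mp hXY
  rw [← hmap] at hF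
  have hint : Integrable F ((μ.map X).prod (μ.map Y)) :=
    hmap ▸ (integrable_map_measure hF (hX.prodMk hY)).mpr hFi
  rw [← integral_prod F hint, ← hmap, integral_map (hX.prodMk hY) hF]

noncomputable def coverProb (μ : Measure Ω) (W C : Ω → ℝ) (s : ℝ) : ℝ :=
  μ.real {ω | W ω ≤ s ∧ s ≤ C ω}

theorem measurable_coverProb [SFinite μ] {W C : Ω → ℝ} (hW : Measurable W) (hC : Measurable C) :
    Measurable (coverProb μ W C) :=
  (measurable_measure_prodMk_left ((measurableSet_le (hW.comp measurable_snd) measurable_fst).inter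
    (measurableSet_le measurable_fst (hC.comp measurable_snd)))).ennreal_toReal

theorem abs_mul_coverProb_le [IsProbabilityMeasure μ] (W C : Ω → ℝ) {x M : ℝ} (hx : |x| ≤ M)
    (s : ℝ) : |x * coverProb μ W C s| ≤ M := by
  rw [abs_mul, coverProb, abs_of_nonneg measureReal_nonneg]
  exact (mul_le_of_le_one_right (abs_nonneg x) measureReal_le_one).trans hx

theorem measureReal_mem_Icc_min_eq_coverProb_mul {T W C : Ω → ℝ}
    (hTWC : IndepFun T (fun ω => (W ω, C ω)) μ) (s : ℝ) :
    μ.real {ω | s ∈ Set.Icc (W ω) (min (T ω) (C ω))}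
      = coverProb μ W C s * μ.real {ω | s ≤ T ω} := by
  have hsplit : {ω | s ∈ Set.Icc (W ω) (min (T ω) (C ω))}
      = T ⁻¹' Set.Ici s ∩ (fun ω => (W ω, C ω)) ⁻¹' {q | q.1 ≤ s ∧ s ≤ q.2} := by
    ext ω
    simp only [Set.mem_Icc, le_min_iff, Set.mem_ofPred_eq, Set.mem_inter_iff, Set.mem_preimage,
      Set.mem_Ici]
    tauto
  rw [hsplit, measureReal_def, hTWC.measure_inter_preimage_eq_mul (Set.Ici s)
    {q : ℝ × ℝ | q.1 ≤ s ∧ s ≤ q.2} measurableSet_Ici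
    ((measurableSet_le measurable_fst measurable_const).inter
      (measurableSet_le measurable_const measurable_snd)), ENNReal.toReal_mul, mul_comm]
  rfl

theorem integral_indicator_window_mul_eq_integral_coverProb_mul [IsFiniteMeasure μ]
    {T C W Z : Ω → ℝ} (hT : Measurable T) (hC : Measurable C) (hW : Measurable W)
    (hindep : IndepFun (fun ω => (Z ω, T ω)) (fun ω => (W ω, C ω)) μ) (hZ : Integrable Z μ)
    {ψ : ℝ → ℝ} (hψ : Measurable ψ) {M : ℝ} (hψM : ∀ t, |ψ t| ≤ M) :
    ∫ ω, {ω' | W ω' ≤ T ω' ∧ T ω' ≤ C ω'}.indicator (fun ω' => ψ (T ω')) ω * Z ω ∂μ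
      = ∫ ω, ψ (T ω) * coverProb μ W C (T ω) * Z ω ∂μ := by
  set window : Set ((ℝ × ℝ) × (ℝ × ℝ)) := {p | p.2.1 ≤ p.1.2 ∧ p.1.2 ≤ p.2.2}
  set F : (ℝ × ℝ) × (ℝ × ℝ) → ℝ := fun p => window.indicator (fun p => ψ p.1.2) p * p.1.1
  have hwindow : MeasurableSet window :=
    (measurableSet_le measurable_snd.fst measurable_fst.snd).inter
      (measurableSet_le measurable_fst.snd measurable_snd.snd)
  have hψwindow : Measurable (window.indicator fun p => ψ p.1.2) :=
    (hψ.comp measurable_fst.snd).indicator hwindow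
  have hF : Measurable F := hψwindow.mul measurable_fst.fst
  have hZT : AEMeasurable (fun ω => (Z ω, T ω)) μ := hZ.aemeasurable.prodMk hT.aemeasurable
  have hWC : Measurable fun ω => (W ω, C ω) := hW.prodMk hC
  have hFi : Integrable (fun ω => F ((Z ω, T ω), (W ω, C ω))) μ :=
    hZ.bdd_mul (hψwindow.comp_aemeasurable (hZT.prodMk hWC.aemeasurable)).aestronglyMeasurable
      (ae_of_all _ fun ω => (norm_indicator_le_norm_self _ _).trans (hψM (T ω)))
  have hinner : ∀ z t, ∫ q, F ((z, t), q) ∂(μ.map fun ω => (W ω, C ω))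
      = ψ t * coverProb μ W C t * z := by
    intro z t
    have hslice : MeasurableSet {q : ℝ × ℝ | q.1 ≤ t ∧ t ≤ q.2} :=
      (measurableSet_le measurable_fst measurable_const).inter
        (measurableSet_le measurable_const measurable_snd)
    change ∫ q, {q : ℝ × ℝ | q.1 ≤ t ∧ t ≤ q.2}.indicator (fun _ => ψ t) q * z ∂_ = _
    rw [integral_mul_const, integral_indicator_const _ hslice, map_measureReal_apply hWC hslice,
      smul_eq_mul, mul_comm (μ.real _)]
    rfl
  calc ∫ ω, {ω' | W ω' ≤ T ω' ∧ T ω' ≤ C ω'}.indicator (fun ω' => ψ (T ω')) ω * Z ω ∂μ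
      = ∫ ω, F ((Z ω, T ω), (W ω, C ω)) ∂μ := rfl
    _ = ∫ x, ∫ y, F (x, y) ∂(μ.map fun ω => (W ω, C ω)) ∂(μ.map fun ω => (Z ω, T ω)) :=
        hindep.integral_comp_prodMk hZT hWC.aemeasurable hF.aestronglyMeasurable hFi
    _ = ∫ x, ψ x.2 * coverProb μ W C x.2 * x.1 ∂(μ.map fun ω => (Z ω, T ω)) := by
        simp_rw [hinner]
    _ = ∫ ω, ψ (T ω) * coverProb μ W C (T ω) * Z ω ∂μ :=
        integral_map hZT (((hψ.comp measurable_snd).mul ((measurable_coverProb hW hC).comp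
          measurable_snd)).mul measurable_fst).aestronglyMeasurable

theorem integral_observedFailure_mul_eq_setIntegral_coverProb [IsProbabilityMeasure μ]
    {T C W Z : Ω → ℝ} (hT : Measurable T) (hC : Measurable C) (hW : Measurable W)
    (hindep : IndepFun (fun ω => (Z ω, T ω)) (fun ω => (W ω, C ω)) μ) (hZ : Integrable Z μ)
    {h : ℝ → ℝ} (hh : Measurable h)
    (hcond : μ[Z | MeasurableSpace.comap T inferInstance] =ᵐ[μ] fun ω => h (T ω))
    (t1 t2 : ℝ) {φ : ℝ → ℝ} (hφ : Measurable φ) {M : ℝ} (hφM : ∀ x, |φ x| ≤ M) :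
    ∫ ω, φ (T ω) * Z ω
        * Set.indicator {ω' | t1 ≤ T ω' ∧ T ω' < t2} (fun _ => (1 : ℝ)) ω
        * Set.indicator {ω' | W ω' ≤ T ω' ∧ T ω' ≤ C ω'} (fun _ => (1 : ℝ)) ω ∂μ
      = ∫ s in Set.Ico t1 t2, φ s * coverProb μ W C s * h s ∂(μ.map T) := by
  set ψ : ℝ → ℝ := (Set.Ico t1 t2).indicator φ
  have hψ : Measurable ψ := hφ.indicator measurableSet_Ico
  have hψM : ∀ t, |ψ t| ≤ M := fun t => (norm_indicator_le_norm_self φ t).trans (hφM t)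
  have hψG : Measurable fun t => ψ t * coverProb μ W C t := hψ.mul (measurable_coverProb hW hC)
  calc _ = ∫ ω, {ω' | W ω' ≤ T ω' ∧ T ω' ≤ C ω'}.indicator (fun ω' => ψ (T ω')) ω * Z ω ∂μ := by
        refine integral_congr_ae (ae_of_all _ fun ω => ?_)
        simp only [ψ, Set.indicator_apply, Set.mem_Ico, Set.mem_ofPred_eq]
        split_ifs <;> ring
    _ = ∫ ω, ψ (T ω) * coverProb μ W C (T ω) * Z ω ∂μ :=
        integral_indicator_window_mul_eq_integral_coverProb_mul hT hC hW hindep hZ hψ hψM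
    _ = ∫ ω, ψ (T ω) * coverProb μ W C (T ω) * h (T ω) ∂μ :=
        integral_comp_mul_eq_of_condExp_comap_ae_eq hT hZ hcond hψG
          fun t => abs_mul_coverProb_le W C (hψM t) t
    _ = ∫ t, ψ t * coverProb μ W C t * h t ∂(μ.map T) :=
        (integral_map hT.aemeasurable (hψG.mul hh).aestronglyMeasurable).symm
    _ = ∫ s in Set.Ico t1 t2, φ s * coverProb μ W C s * h s ∂(μ.map T) := by
        rw [← integral_indicator measurableSet_Ico]
        simp only [ψ, Set.indicator_mul_left]

theorem integral_setIntegral_hazard_atRisk_eq_setIntegral_coverProb [IsProbabilityMeasure μ]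
    {T C W : Ω → ℝ} (hT : Measurable T) (hC : Measurable C) (hW : Measurable W)
    (hTWC : IndepFun T (fun ω => (W ω, C ω)) μ)
    {S : ℝ → ℝ} (hS : ∀ t, S t = (μ {ω | t ≤ T ω}).toReal)
    {h : ℝ → ℝ} (hh : Measurable h) (hh_int : Integrable h (μ.map T))
    {t1 t2 : ℝ} (hSpos : ∀ s ∈ Set.Ico t1 t2, 0 < S s)
    {φ : ℝ → ℝ} (hφ : Measurable φ) {M : ℝ} (hφM : ∀ x, |φ x| ≤ M) :
    ∫ ω, (∫ s in Set.Ico t1 t2,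
          φ s * Set.indicator (Set.Icc (W ω) (min (T ω) (C ω))) (fun _ => (1 : ℝ)) s
            * h s ∂(μ.map T).withDensity (fun s => ENNReal.ofReal (1 / S s))) ∂μ
      = ∫ s in Set.Ico t1 t2, φ s * coverProb μ W C s * h s ∂(μ.map T) := by
  have hS_meas : Measurable S := by
    refine Antitone.measurable fun a b hab => ?_
    rw [hS a, hS b]
    exact ENNReal.toReal_mono (measure_ne_top _ _) (measure_mono fun ω hω => hab.trans hω)
  have hAtRisk : MeasurableSet {p : Ω × ℝ | p.2 ∈ Set.Icc (W p.1) (min (T p.1) (C p.1))} :=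
    (measurableSet_le (hW.comp measurable_fst) measurable_snd).inter
      (measurableSet_le measurable_snd ((hT.comp measurable_fst).min (hC.comp measurable_fst)))
  have hcancel : ∀ s ∈ Set.Ico t1 t2,
      φ s * h s / S s * μ.real {ω | s ∈ Set.Icc (W ω) (min (T ω) (C ω))}
        = φ s * coverProb μ W C s * h s := by
    intro s hs
    rw [measureReal_mem_Icc_min_eq_coverProb_mul hTWC, measureReal_def, ← hS s]
    field_simp [(hSpos s hs).ne']
  have hint : Integrable (fun s => φ s * coverProb μ W C s * h s) (μ.map T) :=
    hh_int.bdd_mul (hφ.mul (measurable_coverProb hW hC)).aestronglyMeasurable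
      (ae_of_all _ fun s => abs_mul_coverProb_le W C (hφM s) s)
  calc _ = ∫ ω, ∫ s in Set.Ico t1 t2, φ s * h s / S s
          * (Set.Icc (W ω) (min (T ω) (C ω))).indicator (fun _ => (1 : ℝ)) s ∂(μ.map T) ∂μ := by
        refine integral_congr_ae (ae_of_all _ fun ω => ?_)
        beta_reduce
        rw [setIntegral_withDensity_ofReal_one_div hS_meas measurableSet_Ico
          fun s _ => (hS s).symm ▸ ENNReal.toReal_nonneg]
        exact integral_congr_ae (ae_of_all _ fun s => by ring)
    _ = ∫ s in Set.Ico t1 t2,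
          φ s * h s / S s * μ.real {ω | s ∈ Set.Icc (W ω) (min (T ω) (C ω))} ∂(μ.map T) :=
        integral_integral_mul_indicator_swap hAtRisk ((hφ.mul hh).div hS_meas)
          (hint.restrict.congr ((ae_restrict_mem measurableSet_Ico).mono
            fun s hs => (hcancel s hs).symm))
    _ = _ := setIntegral_congr_fun measurableSet_Ico hcancel

end ProbabilityTheory

theorem marked_counting_process_compensator_mean_general
    {Ω : Type*} [MeasurableSpace Ω] (μ : Measure Ω) [IsProbabilityMeasure μ]
    (T C W Z : Ω → ℝ) (hT : Measurable T) (hC : Measurable C) (hW : Measurable W)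
    (hindep : IndepFun (fun ω => (Z ω, T ω)) (fun ω => (W ω, C ω)) μ)
    (hZint : Integrable Z μ)
    (S : ℝ → ℝ) (hS : ∀ t, S t = (μ {ω | t ≤ T ω}).toReal)
    (ΛT : Measure ℝ)
    (hΛT : ΛT = (Measure.map T μ).withDensity (fun s => ENNReal.ofReal (1 / S s)))
    (h : ℝ → ℝ) (hh : Measurable h)
    (hcond : μ[Z | MeasurableSpace.comap T inferInstance] =ᵐ[μ] fun ω => h (T ω))
    (t1 t2 : ℝ) (hSpos : ∀ s ∈ Set.Ico t1 t2, 0 < S s)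
    (φ : ℝ → ℝ) (hφ : Measurable φ) (M : ℝ) (hφbd : ∀ x, |φ x| ≤ M) :
    ∫ ω, φ (T ω) * Z ω
        * Set.indicator {ω' | t1 ≤ T ω' ∧ T ω' < t2} (fun _ => (1 : ℝ)) ω
        * Set.indicator {ω' | W ω' ≤ T ω' ∧ T ω' ≤ C ω'} (fun _ => (1 : ℝ)) ω ∂μ
      = ∫ ω, (∫ s in Set.Ico t1 t2,
          φ s * Set.indicator (Set.Icc (W ω) (min (T ω) (C ω))) (fun _ => (1 : ℝ)) s
            * h s ∂ΛT) ∂μ := by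
  subst hΛT
  rw [integral_observedFailure_mul_eq_setIntegral_coverProb hT hC hW hindep hZint hh hcond t1 t2
      hφ hφbd,
    integral_setIntegral_hazard_atRisk_eq_setIntegral_coverProb hT hC hW
      (hindep.comp measurable_snd measurable_id) hS hh
      (integrable_map_of_condExp_comap_ae_eq hT hh hcond) hSpos hφ hφbd]

/-- Under independence of `(Z, T)` from `(W, C)`, integrability of `Z` and
positivity of `S` on `[t1, t2)`, the marked counting process and its compensator have
equal means: for every bounded Borel `φ`,
`E[φ(T) Z 1{t1 ≤ T < t2} 1{W ≤ T ≤ C}]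
  = E[∫_{[t1,t2)} φ(s) 1{W ≤ s ≤ X} h(s) dΛ_T(s)]`,
where `Λ_T` is the cumulative hazard measure (density `1/S` w.r.t. the law of `T`) and
`h ∘ T` is a version of `E[Z | σ(T)]`. -/
theorem marked_counting_process_compensator_mean
    {Ω : Type*} [MeasurableSpace Ω] (μ : Measure Ω) [IsProbabilityMeasure μ]
    (T C W Z : Ω → ℝ) (hT : Measurable T) (hC : Measurable C) (hW : Measurable W)
    (hZmeas : Measurable Z)
    (hindep : IndepFun (fun ω => (Z ω, T ω)) (fun ω => (W ω, C ω)) μ)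
    (hZint : Integrable Z μ)
    (S : ℝ → ℝ) (hS : ∀ t, S t = (μ {ω | t ≤ T ω}).toReal)
    (ΛT : Measure ℝ)
    (hΛT : ΛT = (Measure.map T μ).withDensity (fun s => ENNReal.ofReal (1 / S s)))
    (h : ℝ → ℝ) (hh : Measurable h)
    (hcond : μ[Z | MeasurableSpace.comap T inferInstance] =ᵐ[μ] fun ω => h (T ω))
    (t1 t2 : ℝ) (h12 : t1 < t2) (hSpos : ∀ s ∈ Set.Ico t1 t2, 0 < S s)
    (φ : ℝ → ℝ) (hφ : Measurable φ) (M : ℝ) (hφbd : ∀ x, |φ x| ≤ M) :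
    ∫ ω, φ (T ω) * Z ω
        * Set.indicator {ω' | t1 ≤ T ω' ∧ T ω' < t2} (fun _ => (1 : ℝ)) ω
        * Set.indicator {ω' | W ω' ≤ T ω' ∧ T ω' ≤ C ω'} (fun _ => (1 : ℝ)) ω ∂μ
      = ∫ ω, (∫ s in Set.Ico t1 t2,
          φ s * Set.indicator (Set.Icc (W ω) (min (T ω) (C ω))) (fun _ => (1 : ℝ)) s
            * h s ∂ΛT) ∂μ :=
  marked_counting_process_compensator_mean_general μ T C W Z hT hC hW hindep hZint S hS ΛT hΛT h hh
    hcond t1 t2 hSpos φ hφ M hφbd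
end

section
/- Suppose T is independent of (W, C), T > 0 almost surely, and S(s) > 0 for all s ∈ (0, t] for a fixed t > 0. Then P(T ≤ t and W ≤ T ≤ C) = ∫_{(0, t]} g(s) dμ_T(s) = E[∫_{(0, t]} 1{W ≤ s ≤ X} dΛ_T(s)]; that is, the observed-failure counting process N(t) = 1{T ≤ t, W ≤ T ≤ C} minus its compensator ∫_{(0, t]} 1{W ≤ s ≤ X} dΛ_T(s) has mean zero. -/
/-!
By independence the joint law of `(T, (W, C))` is `μ_T ⊗ μ_{(W,C)}`, so (using `T > 0` a.s.)
`P(T ≤ t, W ≤ T ≤ C) = ∫_{(0,t]} P(W ≤ s ≤ C) dμ_T(s) = ∫_{(0,t]} g dμ_T`.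
For the compensator, Tonelli exchanges the expectation with `dΛ_T`; for fixed `s`, independence
factors the probability of being at risk as `P(s ≤ T, W ≤ s ≤ C) = S(s) g(s)`, and the density
`1 / S(s)` of `Λ_T` cancels `S(s)`.
-/

open MeasureTheory ProbabilityTheory Set

theorem lintegral_measure_prodMk_left_eq_lintegral_measure_prodMk_right
    {α β : Type*} [MeasurableSpace α] [MeasurableSpace β] {μ : Measure α} {ν : Measure β}
    [SFinite μ] [SFinite ν] {E : Set (α × β)} (hE : MeasurableSet E) :
    ∫⁻ x, ν (Prod.mk x ⁻¹' E) ∂μ = ∫⁻ y, μ ((fun x => (x, y)) ⁻¹' E) ∂ν := by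
  rw [← Measure.prod_apply hE, Measure.prod_apply_symm hE]

theorem ProbabilityTheory.IndepFun.measure_mem_and_mem_eq_setLIntegral
    {Ω α β : Type*} [MeasurableSpace Ω] [MeasurableSpace α] [MeasurableSpace β]
    {μ : Measure Ω} [IsFiniteMeasure μ] {X : Ω → α} {Y : Ω → β}
    (hXY : IndepFun X Y μ) (hX : Measurable X) (hY : Measurable Y)
    {I : Set α} (hI : MeasurableSet I) {B : Set (α × β)} (hB : MeasurableSet B) :
    μ {ω | X ω ∈ I ∧ (X ω, Y ω) ∈ B}
      = ∫⁻ x in I, μ {ω | (x, Y ω) ∈ B} ∂(μ.map X) := by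
  have hA : MeasurableSet (Prod.fst ⁻¹' I ∩ B) := (measurable_fst hI).inter hB
  have hsection : ∀ x, μ.map Y (Prod.mk x ⁻¹' (Prod.fst ⁻¹' I ∩ B))
      = I.indicator (fun x => μ {ω | (x, Y ω) ∈ B}) x := by
    intro x
    rw [Measure.map_apply hY (measurable_prodMk_left hA)]
    by_cases hx : x ∈ I <;> simp [hx, Set.preimage]
  calc μ {ω | X ω ∈ I ∧ (X ω, Y ω) ∈ B}
      = μ.map (fun ω => (X ω, Y ω)) (Prod.fst ⁻¹' I ∩ B) :=
        (Measure.map_apply (hX.prodMk hY) hA).symm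
    _ = ∫⁻ x, μ.map Y (Prod.mk x ⁻¹' (Prod.fst ⁻¹' I ∩ B)) ∂(μ.map X) := by
        rw [(indepFun_iff_map_prod_eq_prod_map_map hX.aemeasurable hY.aemeasurable).1 hXY,
          Measure.prod_apply hA]
    _ = ∫⁻ x in I, μ {ω | (x, Y ω) ∈ B} ∂(μ.map X) := by
        rw [lintegral_congr hsection, lintegral_indicator hI]

section Survival

variable {Ω : Type*} [MeasurableSpace Ω] {μ : Measure Ω} {T C W : Ω → ℝ}

theorem measurableSet_mem_Icc_min_inter (hT : Measurable T) (hC : Measurable C)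
    (hW : Measurable W) {I : Set ℝ} (hI : MeasurableSet I) :
    MeasurableSet {p : Ω × ℝ | p.2 ∈ Icc (W p.1) (min (T p.1) (C p.1)) ∩ I} :=
  ((measurableSet_le (hW.comp measurable_fst) measurable_snd).inter
    (measurableSet_le measurable_snd
      ((hT.comp measurable_fst).min (hC.comp measurable_fst)))).inter (measurable_snd hI)

theorem measurable_measure_le_and_le [SFinite μ] (hC : Measurable C) (hW : Measurable W) :
    Measurable fun s => μ {ω | W ω ≤ s ∧ s ≤ C ω} :=
  measurable_measure_prodMk_right (μ := μ)
    (s := {p : Ω × ℝ | W p.1 ≤ p.2 ∧ p.2 ≤ C p.1})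
    ((measurableSet_le (hW.comp measurable_fst) measurable_snd).inter
      (measurableSet_le measurable_snd (hC.comp measurable_fst)))

variable [IsFiniteMeasure μ]

theorem measure_observedFailure_eq_setLIntegral (hT : Measurable T) (hC : Measurable C)
    (hW : Measurable W) (hindep : IndepFun T (fun ω => (W ω, C ω)) μ)
    (hTpos : ∀ᵐ ω ∂μ, 0 < T ω) (t : ℝ) :
    μ {ω | T ω ≤ t ∧ W ω ≤ T ω ∧ T ω ≤ C ω}
      = ∫⁻ s in Ioc 0 t, μ {ω | W ω ≤ s ∧ s ≤ C ω} ∂(μ.map T) := by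
  have hB : MeasurableSet {p : ℝ × ℝ × ℝ | p.2.1 ≤ p.1 ∧ p.1 ≤ p.2.2} :=
    (measurableSet_le measurable_snd.fst measurable_fst).inter
      (measurableSet_le measurable_fst measurable_snd.snd)
  calc μ {ω | T ω ≤ t ∧ W ω ≤ T ω ∧ T ω ≤ C ω}
      = μ {ω | T ω ∈ Ioc 0 t ∧
          (T ω, (W ω, C ω)) ∈ {p : ℝ × ℝ × ℝ | p.2.1 ≤ p.1 ∧ p.1 ≤ p.2.2}} := by
        refine measure_congr (Filter.eventuallyEq_set.2 ?_)
        filter_upwards [hTpos] with ω hω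
        simp [hω]
    _ = _ :=
        hindep.measure_mem_and_mem_eq_setLIntegral hT (hW.prodMk hC) measurableSet_Ioc hB

theorem lintegral_compensator_eq_setLIntegral (hT : Measurable T) (hC : Measurable C)
    (hW : Measurable W) (hindep : IndepFun T (fun ω => (W ω, C ω)) μ)
    {I : Set ℝ} (hI : MeasurableSet I) {k : ℝ → ENNReal} (hk : Measurable k)
    (hkI : ∀ s ∈ I, k s * μ {ω | s ≤ T ω} = 1) :
    ∫⁻ ω, (μ.map T).withDensity k (Icc (W ω) (min (T ω) (C ω)) ∩ I) ∂μ
      = ∫⁻ s in I, μ {ω | W ω ≤ s ∧ s ≤ C ω} ∂(μ.map T) := by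
  have hE := measurableSet_mem_Icc_min_inter hT hC hW hI
  have hatRisk : ∀ s, μ {ω | s ∈ Icc (W ω) (min (T ω) (C ω)) ∩ I}
      = I.indicator (fun s => μ {ω | s ≤ T ω} * μ {ω | W ω ≤ s ∧ s ≤ C ω}) s := by
    intro s
    by_cases hs : s ∈ I
    · have hBs : MeasurableSet {q : ℝ × ℝ | q.1 ≤ s ∧ s ≤ q.2} :=
        (measurableSet_le measurable_fst measurable_const).inter
          (measurableSet_le measurable_const measurable_snd)
      rw [indicator_of_mem hs]
      calc μ {ω | s ∈ Icc (W ω) (min (T ω) (C ω)) ∩ I}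
          = μ (T ⁻¹' Ici s ∩
              (fun ω => (W ω, C ω)) ⁻¹' {q : ℝ × ℝ | q.1 ≤ s ∧ s ≤ q.2}) := by
            congr 1
            ext ω
            simp only [mem_inter_iff, mem_Icc, le_inf_iff, hs, and_true, mem_ofPred_eq,
              preimage_ofPred_eq, mem_preimage, mem_Ici]
            tauto
        _ = _ := hindep.measure_inter_preimage_eq_mul _ _ measurableSet_Ici hBs
    · simp [hs]
  calc ∫⁻ ω, (μ.map T).withDensity k (Icc (W ω) (min (T ω) (C ω)) ∩ I) ∂μ
      = ∫⁻ s, μ {ω | s ∈ Icc (W ω) (min (T ω) (C ω)) ∩ I}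
          ∂((μ.map T).withDensity k) :=
        lintegral_measure_prodMk_left_eq_lintegral_measure_prodMk_right hE
    _ = ∫⁻ s, k s * μ {ω | s ∈ Icc (W ω) (min (T ω) (C ω)) ∩ I} ∂(μ.map T) :=
        lintegral_withDensity_eq_lintegral_mul _ hk (measurable_measure_prodMk_right hE)
    _ = ∫⁻ s in I, k s * (μ {ω | s ≤ T ω} * μ {ω | W ω ≤ s ∧ s ≤ C ω})
          ∂(μ.map T) := by
        simp_rw [hatRisk, ← indicator_mul_right]
        exact lintegral_indicator hI _
    _ = ∫⁻ s in I, μ {ω | W ω ≤ s ∧ s ≤ C ω} ∂(μ.map T) :=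
        setLIntegral_congr_fun hI fun s hs => by rw [← mul_assoc, hkI s hs, one_mul]

end Survival

theorem counting_process_compensator_mean_zero_general
    {Ω : Type*} [MeasurableSpace Ω] (μ : Measure Ω) [IsProbabilityMeasure μ]
    (T C W : Ω → ℝ) (hT : Measurable T) (hC : Measurable C) (hW : Measurable W)
    (hindep : IndepFun T (fun ω => (W ω, C ω)) μ)
    (hTpos : ∀ᵐ ω ∂μ, 0 < T ω)
    (S g : ℝ → ℝ)
    (hS : ∀ s, S s = (μ {ω | s ≤ T ω}).toReal)
    (hg : ∀ s, g s = (μ {ω | W ω ≤ s ∧ s ≤ C ω}).toReal)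
    (ΛT : Measure ℝ)
    (hΛT : ΛT = (Measure.map T μ).withDensity (fun s => ENNReal.ofReal (1 / S s)))
    (t : ℝ) (hSpos : ∀ s ∈ Set.Ioc 0 t, 0 < S s) :
    (μ {ω | T ω ≤ t ∧ W ω ≤ T ω ∧ T ω ≤ C ω}).toReal
        = ∫ s in Set.Ioc 0 t, g s ∂(Measure.map T μ)
      ∧ ∫ s in Set.Ioc 0 t, g s ∂(Measure.map T μ)
        = ∫ ω, (∫ s in Set.Ioc 0 t,
            Set.indicator (Set.Icc (W ω) (min (T ω) (C ω))) (fun _ => (1 : ℝ)) s ∂ΛT) ∂μ := by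
  have hobs := measure_observedFailure_eq_setLIntegral hT hC hW hindep hTpos t
  have hmean : ∫ s in Ioc 0 t, g s ∂(μ.map T)
      = (μ {ω | T ω ≤ t ∧ W ω ≤ T ω ∧ T ω ≤ C ω}).toReal := by
    simp_rw [hg, hobs]
    exact integral_toReal (measurable_measure_le_and_le hC hW).aemeasurable
      (ae_of_all _ fun _ => measure_lt_top _ _)
  have hSm : Measurable S := Antitone.measurable fun a b hab => by
    simp only [hS]
    exact ENNReal.toReal_mono (measure_ne_top _ _) (measure_mono fun ω h => hab.trans h)
  have hhazard : ∀ s ∈ Ioc 0 t, ENNReal.ofReal (1 / S s) * μ {ω | s ≤ T ω} = 1 := by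
    intro s hs
    rw [← ENNReal.ofReal_toReal (measure_ne_top μ _), ← hS,
      ← ENNReal.ofReal_mul (one_div_pos.2 (hSpos s hs)).le,
      one_div_mul_cancel (hSpos s hs).ne', ENNReal.ofReal_one]
  have hcomp := lintegral_compensator_eq_setLIntegral hT hC hW hindep measurableSet_Ioc
    (k := fun s => ENNReal.ofReal (1 / S s)) (by fun_prop) hhazard
  rw [← hΛT, ← hobs] at hcomp
  have hinner : ∀ ω, ∫ s in Ioc 0 t,
      (Icc (W ω) (min (T ω) (C ω))).indicator (fun _ => (1 : ℝ)) s ∂ΛT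
        = (ΛT (Icc (W ω) (min (T ω) (C ω)) ∩ Ioc 0 t)).toReal := fun _ =>
    (integral_indicator_one measurableSet_Icc).trans
      (measureReal_restrict_apply measurableSet_Icc)
  have hΛTm : Measurable fun ω => ΛT (Icc (W ω) (min (T ω) (C ω)) ∩ Ioc 0 t) := by
    rw [hΛT]
    exact measurable_measure_prodMk_left
      (measurableSet_mem_Icc_min_inter hT hC hW measurableSet_Ioc)
  refine ⟨hmean.symm, ?_⟩
  rw [hmean, integral_congr_ae (ae_of_all _ hinner),
    integral_toReal hΛTm.aemeasurable (ae_lt_top hΛTm (hcomp ▸ measure_ne_top _ _)),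
    hcomp]

/-- If `T` is independent of `(W, C)`, `T > 0` a.s., and `S > 0` on `(0, t]`
for a fixed `t > 0`, then
`P(T ≤ t, W ≤ T ≤ C) = ∫_{(0,t]} g(s) dμ_T(s) = E[∫_{(0,t]} 1{W ≤ s ≤ X} dΛ_T(s)]`;
i.e. the observed-failure counting process minus its compensator has mean zero. -/
theorem counting_process_compensator_mean_zero
    {Ω : Type*} [MeasurableSpace Ω] (μ : Measure Ω) [IsProbabilityMeasure μ]
    (T C W : Ω → ℝ) (hT : Measurable T) (hC : Measurable C) (hW : Measurable W)
    (hindep : IndepFun T (fun ω => (W ω, C ω)) μ)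
    (hTpos : ∀ᵐ ω ∂μ, 0 < T ω)
    (S g : ℝ → ℝ)
    (hS : ∀ s, S s = (μ {ω | s ≤ T ω}).toReal)
    (hg : ∀ s, g s = (μ {ω | W ω ≤ s ∧ s ≤ C ω}).toReal)
    (ΛT : Measure ℝ)
    (hΛT : ΛT = (Measure.map T μ).withDensity (fun s => ENNReal.ofReal (1 / S s)))
    (t : ℝ) (ht : 0 < t) (hSpos : ∀ s ∈ Set.Ioc 0 t, 0 < S s) :
    (μ {ω | T ω ≤ t ∧ W ω ≤ T ω ∧ T ω ≤ C ω}).toReal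
        = ∫ s in Set.Ioc 0 t, g s ∂(Measure.map T μ)
      ∧ ∫ s in Set.Ioc 0 t, g s ∂(Measure.map T μ)
        = ∫ ω, (∫ s in Set.Ioc 0 t,
            Set.indicator (Set.Icc (W ω) (min (T ω) (C ω))) (fun _ => (1 : ℝ)) s ∂ΛT) ∂μ :=
  counting_process_compensator_mean_zero_general μ T C W hT hC hW hindep hTpos S g hS hg ΛT hΛT t
    hSpos
end
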